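/- Let q* > 0 and define the operator W on the space of continuous functions on [α₀, ξ] by W(u)(η) = q*·(Φ(ξ, u) − Φ(η, u)) for η ∈ [α₀, ξ]. Then for all continuous u, u* : [α₀, ξ] → ℝ one has ‖W(u) − W(u*)‖ ≤ 2·q*·Φ̃(α₀, ξ)·‖u − u*‖, where ‖·‖ denotes the supremum norm on [α₀, ξ]. -/

import Mathlib

open Real MeasureTheory Set

/-- `E(η,u) = exp(−(2/a)·∫_{α₀}^{η} s·N*(u(s))/L*(u(s)) ds)` -/
noncomputable def Efun (a : ℝ) (L N : ℝ → ℝ) (α₀ : ℝ) (u : ℝ → ℝ) (η : ℝ) : ℝ :=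
  Real.exp (-(2 / a) * ∫ s in α₀..η, s * N (u s) / L (u s))

/-- `Φ(η,u) = α₀^ν·∫_{α₀}^{η} E(v,u)/(v^ν·L*(u(v))) dv` -/
noncomputable def Phi (a ν : ℝ) (L N : ℝ → ℝ) (α₀ : ℝ) (u : ℝ → ℝ) (η : ℝ) : ℝ :=
  α₀ ^ ν * ∫ v in α₀..η, Efun a L N α₀ u v / (v ^ ν * L (u v))

/-- Supremum norm on the interval `[α₀, ξ]`. -/
noncomputable def supNorm (α₀ ξ : ℝ) (f : ℝ → ℝ) : ℝ :=
  ⨆ η : Icc α₀ ξ, |f η|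

/-- The Lipschitz bound `Φ̃(α₀, η)` from Lemma 4. -/
noncomputable def PhiTilde (a ν Lm NM Ltil Ntil α₀ η : ℝ) : ℝ :=
  (α₀ ^ ν / Lm ^ 2) *
    ((1 / a) * (Ntil + NM * Ltil / Lm) *
        (η ^ (3 - ν) / (3 - ν) - α₀ ^ 2 * η ^ (1 - ν) / (1 - ν) +
          2 * α₀ ^ (3 - ν) / ((3 - ν) * (1 - ν))) +
      Ltil * (η ^ (1 - ν) - α₀ ^ (1 - ν)) / (1 - ν))

/-! The ratio `N/L` is Lipschitz with constant `C = Ñ/L_m + N_M L̃/L_m²`, so the exponent of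
`E(v, ·)` moves by at most `(C/a) (v² - α₀²) ‖u - u*‖`, and so does `E(v, ·)` itself because
`exp` is `1`-Lipschitz on `(-∞, 0]`. With `0 < E ≤ 1` and `L ≥ L_m`, the integrand of `Φ` then
moves by at most `‖u - u*‖ ((C / (a L_m)) (v² - α₀²) + L̃/L_m²) v^(-ν)`, and `α₀^ν` times the
integral of this density over `[α₀, ξ]` is exactly `Φ̃(α₀, ξ)`. Hence
`|Φ(η, u) - Φ(η, u*)| ≤ Φ̃(α₀, ξ) ‖u - u*‖` for every `η`, and the two terms of
`W(u)(η) - W(u*)(η)` give the factor `2 q*`. -/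

lemma abs_exp_neg_sub_exp_neg_le {x y : ℝ} (hx : 0 ≤ x) (hy : 0 ≤ y) :
    |exp (-x) - exp (-y)| ≤ |x - y| := by
  wlog hyx : y ≤ x generalizing x y
  · rw [abs_sub_comm, abs_sub_comm x y]
    exact this hy hx (le_of_not_ge hyx)
  -- `exp (-y) - exp (-x) = exp (-y) * (1 - exp (-(x - y))) ≤ x - y`, by `1 + t ≤ exp t`.
  have hsplit : exp (-x) = exp (-y) * exp (-(x - y)) := by rw [← exp_add]; ring_nf
  have hy1 : exp (-y) ≤ 1 := exp_le_one_iff.mpr (by linarith)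
  have hxy1 : exp (-(x - y)) ≤ 1 := exp_le_one_iff.mpr (by linarith)
  have htangent : 1 - (x - y) ≤ exp (-(x - y)) := by linarith [add_one_le_exp (-(x - y))]
  have hy0 := exp_pos (-y)
  rw [hsplit, abs_of_nonpos (by nlinarith), abs_of_nonneg (by linarith)]
  nlinarith

lemma abs_div_sub_div_le {n₁ n₂ l₁ l₂ m K : ℝ} (hm : 0 < m) (hl₁ : m ≤ l₁) (hl₂ : m ≤ l₂)
    (hn₂ : |n₂| ≤ K) :
    |n₁ / l₁ - n₂ / l₂| ≤ |n₁ - n₂| / m + K * |l₁ - l₂| / m ^ 2 := by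
  have hl₁0 : 0 < l₁ := hm.trans_le hl₁
  have hl₂0 : 0 < l₂ := hm.trans_le hl₂
  have hsplit : n₁ / l₁ - n₂ / l₂ = (n₁ - n₂) / l₁ + n₂ * (l₂ - l₁) / (l₁ * l₂) := by
    field_simp; ring
  have hfirst : |(n₁ - n₂) / l₁| ≤ |n₁ - n₂| / m := by
    rw [abs_div, abs_of_pos hl₁0]
    exact div_le_div_of_nonneg_left (abs_nonneg _) hm hl₁
  have hsecond : |n₂ * (l₂ - l₁) / (l₁ * l₂)| ≤ K * |l₁ - l₂| / m ^ 2 := by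
    rw [abs_div, abs_mul, abs_sub_comm, abs_of_pos (mul_pos hl₁0 hl₂0), sq]
    exact div_le_div₀ (mul_nonneg ((abs_nonneg _).trans hn₂) (abs_nonneg _))
      (mul_le_mul_of_nonneg_right hn₂ (abs_nonneg _))
      (by positivity) (mul_le_mul hl₁ hl₂ hm.le hl₁0.le)
  rw [hsplit]
  exact (abs_add_le _ _).trans (add_le_add hfirst hsecond)

lemma abs_intervalIntegral_sub_le {f g h : ℝ → ℝ} {a b c : ℝ} (hab : a ≤ b) (hbc : b ≤ c)
    (hf : IntervalIntegrable f volume a b) (hg : IntervalIntegrable g volume a b)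
    (hh : IntervalIntegrable h volume a c) (hfgh : ∀ t ∈ Icc a c, |f t - g t| ≤ h t) :
    |(∫ t in a..b, f t) - ∫ t in a..b, g t| ≤ ∫ t in a..c, h t := by
  have hh_nonneg : 0 ≤ᵐ[volume.restrict (Ioc a c)] h :=
    (ae_restrict_iff' measurableSet_Ioc).mpr <| ae_of_all _ fun t ht =>
      (abs_nonneg _).trans (hfgh t (Ioc_subset_Icc_self ht))
  rw [← intervalIntegral.integral_sub hf hg]
  calc |∫ t in a..b, f t - g t|
      ≤ ∫ t in a..b, |f t - g t| := intervalIntegral.abs_integral_le_integral_abs hab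
    _ ≤ ∫ t in a..b, h t :=
        intervalIntegral.integral_mono_on hab (hf.sub hg).abs
          (hh.mono_set (uIcc_subset_uIcc_left (Icc_subset_uIcc ⟨hab, hbc⟩)))
          fun t ht => hfgh t ⟨ht.1, ht.2.trans hbc⟩
    _ ≤ ∫ t in a..c, h t := intervalIntegral.integral_mono_interval le_rfl hab hbc hh_nonneg hh

section SupNorm

variable {α₀ ξ : ℝ} {f : ℝ → ℝ}

lemma abs_le_supNorm (hf : ContinuousOn f (Icc α₀ ξ)) {x : ℝ} (hx : x ∈ Icc α₀ ξ) :
    |f x| ≤ supNorm α₀ ξ f := by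
  obtain ⟨C, hC⟩ := (isCompact_Icc.image_of_continuousOn hf.abs).bddAbove
  exact le_ciSup (f := fun η : Icc α₀ ξ => |f η|)
    ⟨C, by rintro _ ⟨⟨y, hy⟩, rfl⟩; exact hC ⟨y, hy, rfl⟩⟩ ⟨x, hx⟩

lemma supNorm_le (hαξ : α₀ ≤ ξ) {C : ℝ} (hC : ∀ x ∈ Icc α₀ ξ, |f x| ≤ C) :
    supNorm α₀ ξ f ≤ C :=
  have : Nonempty (Icc α₀ ξ) := ⟨⟨α₀, left_mem_Icc.mpr hαξ⟩⟩
  ciSup_le fun x => hC x x.2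

end SupNorm

section Efun

variable {a α₀ ξ δ Lm NM Ltil Ntil : ℝ} {L N u w : ℝ → ℝ}

lemma abs_div_sub_div_comp_le (hLm : 0 < Lm) (hL : ∀ x, Lm ≤ L x) (hN : ∀ x, |N x| ≤ NM)
    (hLlip : ∀ x y, |L x - L y| ≤ Ltil * |x - y|)
    (hNlip : ∀ x y, |N x - N y| ≤ Ntil * |x - y|) (x y : ℝ) :
    |N x / L x - N y / L y| ≤ (Ntil / Lm + NM * Ltil / Lm ^ 2) * |x - y| := by
  have hNM : 0 ≤ NM := (abs_nonneg _).trans (hN 0)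
  calc |N x / L x - N y / L y|
      ≤ |N x - N y| / Lm + NM * |L x - L y| / Lm ^ 2 := abs_div_sub_div_le hLm (hL x) (hL y) (hN y)
    _ ≤ Ntil * |x - y| / Lm + NM * (Ltil * |x - y|) / Lm ^ 2 := by
        gcongr
        exacts [hNlip x y, hLlip x y]
    _ = (Ntil / Lm + NM * Ltil / Lm ^ 2) * |x - y| := by ring

lemma continuousOn_mul_div_comp {s : Set ℝ} (hLcont : Continuous L) (hNcont : Continuous N)
    (hL : ∀ x, L x ≠ 0) (hu : ContinuousOn u s) :
    ContinuousOn (fun t => t * N (u t) / L (u t)) s :=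
  (continuousOn_id.mul (hNcont.comp_continuousOn hu)).div (hLcont.comp_continuousOn hu)
    fun _ _ => hL _

lemma integral_mul_div_comp_nonneg (hα₀ : 0 ≤ α₀) {v : ℝ} (hv : α₀ ≤ v) (hL : ∀ x, 0 < L x)
    (hN : ∀ x, 0 ≤ N x) : 0 ≤ ∫ s in α₀..v, s * N (u s) / L (u s) :=
  intervalIntegral.integral_nonneg hv fun _ hs =>
    div_nonneg (mul_nonneg (hα₀.trans hs.1) (hN _)) (hL _).le

lemma Efun_le_one (ha : 0 ≤ a) (hα₀ : 0 ≤ α₀) {v : ℝ} (hv : α₀ ≤ v) (hL : ∀ x, 0 < L x)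
    (hN : ∀ x, 0 ≤ N x) : Efun a L N α₀ u v ≤ 1 := by
  rw [Efun, exp_le_one_iff, neg_mul, neg_nonpos]
  exact mul_nonneg (by positivity) (integral_mul_div_comp_nonneg hα₀ hv hL hN)

lemma continuousOn_Efun (hαξ : α₀ ≤ ξ) (hLcont : Continuous L) (hNcont : Continuous N)
    (hL : ∀ x, L x ≠ 0) (hu : ContinuousOn u (Icc α₀ ξ)) :
    ContinuousOn (Efun a L N α₀ u) (Icc α₀ ξ) := by
  rw [← uIcc_of_le hαξ] at hu ⊢
  have hprimitive := intervalIntegral.continuousOn_primitive_interval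
    ((continuousOn_mul_div_comp hLcont hNcont hL hu).integrableOn_compact (μ := volume)
      isCompact_uIcc)
  exact continuous_exp.comp_continuousOn (continuousOn_const.mul hprimitive)

lemma abs_integral_mul_div_comp_sub_le (hα₀ : 0 ≤ α₀) (hLcont : Continuous L)
    (hNcont : Continuous N) (hLm : 0 < Lm) (hL : ∀ x, Lm ≤ L x) (hN : ∀ x, |N x| ≤ NM)
    (hLtil : 0 ≤ Ltil) (hNtil : 0 ≤ Ntil)
    (hLlip : ∀ x y, |L x - L y| ≤ Ltil * |x - y|) (hNlip : ∀ x y, |N x - N y| ≤ Ntil * |x - y|)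
    (hu : ContinuousOn u (Icc α₀ ξ)) (hw : ContinuousOn w (Icc α₀ ξ))
    (hδ : ∀ t ∈ Icc α₀ ξ, |u t - w t| ≤ δ) {v : ℝ} (hv : v ∈ Icc α₀ ξ) :
    |(∫ s in α₀..v, s * N (u s) / L (u s)) - ∫ s in α₀..v, s * N (w s) / L (w s)|
      ≤ (Ntil / Lm + NM * Ltil / Lm ^ 2) * δ * ((v ^ 2 - α₀ ^ 2) / 2) := by
  set C := Ntil / Lm + NM * Ltil / Lm ^ 2
  have hC : 0 ≤ C := by have := (abs_nonneg _).trans (hN 0); positivity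
  have hint : ∀ z, ContinuousOn z (Icc α₀ ξ) →
      IntervalIntegrable (fun s => s * N (z s) / L (z s)) volume α₀ v := fun z hz =>
    ((continuousOn_mul_div_comp hLcont hNcont (fun x => (hLm.trans_le (hL x)).ne') hz).mono
      (Icc_subset_Icc_right hv.2)).intervalIntegrable_of_Icc hv.1
  rw [← integral_id, ← intervalIntegral.integral_const_mul]
  refine abs_intervalIntegral_sub_le hv.1 le_rfl (hint u hu) (hint w hw)
    ((continuous_const_mul (C * δ)).intervalIntegrable _ _) fun t ht => ?_
  have ht0 : 0 ≤ t := hα₀.trans ht.1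
  calc |t * N (u t) / L (u t) - t * N (w t) / L (w t)|
      = t * |N (u t) / L (u t) - N (w t) / L (w t)| := by
        rw [mul_div_assoc, mul_div_assoc, ← mul_sub, abs_mul, abs_of_nonneg ht0]
    _ ≤ t * (C * δ) := by
        gcongr
        exact (abs_div_sub_div_comp_le hLm hL hN hLlip hNlip _ _).trans
          (mul_le_mul_of_nonneg_left (hδ t ⟨ht.1, ht.2.trans hv.2⟩) hC)
    _ = C * δ * t := by ring

lemma abs_Efun_sub_le (ha : 0 < a) (hα₀ : 0 ≤ α₀) (hLcont : Continuous L)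
    (hNcont : Continuous N) (hLm : 0 < Lm) (hL : ∀ x, Lm ≤ L x) (hN0 : ∀ x, 0 ≤ N x)
    (hNM : ∀ x, N x ≤ NM) (hLtil : 0 ≤ Ltil) (hNtil : 0 ≤ Ntil)
    (hLlip : ∀ x y, |L x - L y| ≤ Ltil * |x - y|) (hNlip : ∀ x y, |N x - N y| ≤ Ntil * |x - y|)
    (hu : ContinuousOn u (Icc α₀ ξ)) (hw : ContinuousOn w (Icc α₀ ξ))
    (hδ : ∀ t ∈ Icc α₀ ξ, |u t - w t| ≤ δ) {v : ℝ} (hv : v ∈ Icc α₀ ξ) :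
    |Efun a L N α₀ u v - Efun a L N α₀ w v|
      ≤ (Ntil / Lm + NM * Ltil / Lm ^ 2) * δ * (v ^ 2 - α₀ ^ 2) / a := by
  have hLpos : ∀ x, 0 < L x := fun x => hLm.trans_le (hL x)
  have hinner := abs_integral_mul_div_comp_sub_le hα₀ hLcont hNcont hLm hL
    (fun x => (abs_of_nonneg (hN0 x)).trans_le (hNM x)) hLtil hNtil hLlip hNlip hu hw hδ hv
  have h2a : 0 < 2 / a := by positivity
  rw [Efun, Efun, neg_mul, neg_mul]
  calc |exp (-(2 / a * ∫ s in α₀..v, s * N (u s) / L (u s)))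
        - exp (-(2 / a * ∫ s in α₀..v, s * N (w s) / L (w s)))|
      ≤ |2 / a * (∫ s in α₀..v, s * N (u s) / L (u s))
          - 2 / a * ∫ s in α₀..v, s * N (w s) / L (w s)| :=
        abs_exp_neg_sub_exp_neg_le
          (mul_nonneg h2a.le (integral_mul_div_comp_nonneg hα₀ hv.1 hLpos hN0))
          (mul_nonneg h2a.le (integral_mul_div_comp_nonneg hα₀ hv.1 hLpos hN0))
    _ = 2 / a * |(∫ s in α₀..v, s * N (u s) / L (u s))
          - ∫ s in α₀..v, s * N (w s) / L (w s)| := by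
        rw [← mul_sub, abs_mul, abs_of_pos h2a]
    _ ≤ 2 / a * ((Ntil / Lm + NM * Ltil / Lm ^ 2) * δ * ((v ^ 2 - α₀ ^ 2) / 2)) := by gcongr
    _ = (Ntil / Lm + NM * Ltil / Lm ^ 2) * δ * (v ^ 2 - α₀ ^ 2) / a := by field_simp

end Efun

noncomputable def phiTildeIntegrand (a ν Lm NM Ltil Ntil α₀ v : ℝ) : ℝ :=
  ((Ntil / Lm + NM * Ltil / Lm ^ 2) / (a * Lm) * (v ^ 2 - α₀ ^ 2) + Ltil / Lm ^ 2) * v ^ (-ν)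

section PhiTilde

variable {a ν α₀ ξ Lm NM Ltil Ntil : ℝ}

lemma continuousOn_phiTildeIntegrand (hα₀ : 0 < α₀) :
    ContinuousOn (phiTildeIntegrand a ν Lm NM Ltil Ntil α₀) (Icc α₀ ξ) :=
  (continuous_const.mul ((continuous_pow 2).sub continuous_const) |>.add
    continuous_const).continuousOn.mul
    (continuousOn_id.rpow_const fun _ hv => Or.inl (hα₀.trans_le hv.1).ne')

lemma PhiTilde_eq_integral (hν : ν < 1) (hα₀ : 0 < α₀) (hξ : 0 < ξ) (hLm : Lm ≠ 0) :
    PhiTilde a ν Lm NM Ltil Ntil α₀ ξ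
      = α₀ ^ ν * ∫ v in α₀..ξ, phiTildeIntegrand a ν Lm NM Ltil Ntil α₀ v := by
  set A := (Ntil / Lm + NM * Ltil / Lm ^ 2) / (a * Lm)
  set B := Ltil / Lm ^ 2
  have hpos : ∀ v ∈ uIcc α₀ ξ, 0 < v := fun v hv => lt_min hα₀ hξ |>.trans_le hv.1
  have hsplit : EqOn (phiTildeIntegrand a ν Lm NM Ltil Ntil α₀)
      (fun v => A * v ^ (2 - ν) + (B - A * α₀ ^ 2) * v ^ (-ν)) (uIcc α₀ ξ) := fun v hv => by
    dsimp only
    rw [phiTildeIntegrand, sub_eq_add_neg (2 : ℝ), rpow_add (hpos v hv), rpow_two]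
    ring
  have hint : ∀ r : ℝ, -1 < r → IntervalIntegrable (fun v : ℝ => v ^ r) volume α₀ ξ := fun r hr =>
    intervalIntegral.intervalIntegrable_rpow' hr
  rw [intervalIntegral.integral_congr hsplit,
    intervalIntegral.integral_add ((hint _ (by linarith)).const_mul _)
      ((hint _ (by linarith)).const_mul _),
    intervalIntegral.integral_const_mul, intervalIntegral.integral_const_mul,
    integral_rpow (Or.inl (by linarith)), integral_rpow (Or.inl (by linarith)),
    show 2 - ν + 1 = 2 + (1 - ν) by ring, show -ν + 1 = 1 - ν by ring, PhiTilde,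
    show (3 : ℝ) - ν = 2 + (1 - ν) by ring, rpow_add hα₀, rpow_two]
  have h1ν : 1 - ν ≠ 0 := by linarith
  have h3ν : 2 + (1 - ν) ≠ 0 := by linarith
  simp only [A, B]
  field_simp
  ring

end PhiTilde

section Phi

variable {a ν α₀ ξ δ Lm NM Ltil Ntil : ℝ} {L N u w : ℝ → ℝ}

lemma continuousOn_Phi_integrand (hα₀ : 0 < α₀) (hαξ : α₀ ≤ ξ) (hLcont : Continuous L)
    (hNcont : Continuous N) (hL : ∀ x, 0 < L x) (hu : ContinuousOn u (Icc α₀ ξ)) :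
    ContinuousOn (fun v => Efun a L N α₀ u v / (v ^ ν * L (u v))) (Icc α₀ ξ) :=
  (continuousOn_Efun hαξ hLcont hNcont (fun x => (hL x).ne') hu).div
    ((continuousOn_id.rpow_const fun _ hv => Or.inl (hα₀.trans_le hv.1).ne').mul
      (hLcont.comp_continuousOn hu))
    fun _ hv => (mul_pos (rpow_pos_of_pos (hα₀.trans_le hv.1) ν) (hL _)).ne'

lemma abs_Phi_integrand_sub_le (ha : 0 < a) (hα₀ : 0 < α₀) (hLcont : Continuous L)
    (hNcont : Continuous N) (hLm : 0 < Lm) (hL : ∀ x, Lm ≤ L x) (hN0 : ∀ x, 0 ≤ N x)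
    (hNM : ∀ x, N x ≤ NM) (hLtil : 0 ≤ Ltil) (hNtil : 0 ≤ Ntil)
    (hLlip : ∀ x y, |L x - L y| ≤ Ltil * |x - y|) (hNlip : ∀ x y, |N x - N y| ≤ Ntil * |x - y|)
    (hu : ContinuousOn u (Icc α₀ ξ)) (hw : ContinuousOn w (Icc α₀ ξ))
    (hδ : ∀ t ∈ Icc α₀ ξ, |u t - w t| ≤ δ) {v : ℝ} (hv : v ∈ Icc α₀ ξ) :
    |Efun a L N α₀ u v / (v ^ ν * L (u v)) - Efun a L N α₀ w v / (v ^ ν * L (w v))|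
      ≤ δ * phiTildeIntegrand a ν Lm NM Ltil Ntil α₀ v := by
  have hv0 : 0 < v := hα₀.trans_le hv.1
  have hLpos : ∀ x, 0 < L x := fun x => hLm.trans_le (hL x)
  have hE : |Efun a L N α₀ u v - Efun a L N α₀ w v|
      ≤ (Ntil / Lm + NM * Ltil / Lm ^ 2) * δ * (v ^ 2 - α₀ ^ 2) / a :=
    abs_Efun_sub_le ha hα₀.le hLcont hNcont hLm hL hN0 hNM hLtil hNtil hLlip hNlip hu hw hδ hv
  have hEw : |Efun a L N α₀ w v| ≤ 1 :=
    (abs_of_pos (exp_pos _)).trans_le (Efun_le_one ha.le hα₀.le hv.1 hLpos hN0)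
  have hLuw : |L (u v) - L (w v)| ≤ Ltil * δ :=
    (hLlip _ _).trans (mul_le_mul_of_nonneg_left (hδ v hv) hLtil)
  simp only [div_mul_eq_div_div_swap, ← sub_div]
  rw [abs_div, abs_of_pos (rpow_pos_of_pos hv0 ν), div_le_iff₀ (rpow_pos_of_pos hv0 ν)]
  calc |Efun a L N α₀ u v / L (u v) - Efun a L N α₀ w v / L (w v)|
      ≤ |Efun a L N α₀ u v - Efun a L N α₀ w v| / Lm + 1 * |L (u v) - L (w v)| / Lm ^ 2 :=
        abs_div_sub_div_le hLm (hL _) (hL _) hEw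
    _ ≤ (Ntil / Lm + NM * Ltil / Lm ^ 2) * δ * (v ^ 2 - α₀ ^ 2) / a / Lm
          + 1 * (Ltil * δ) / Lm ^ 2 := by gcongr
    _ = δ * phiTildeIntegrand a ν Lm NM Ltil Ntil α₀ v * v ^ ν := by
        rw [phiTildeIntegrand, rpow_neg hv0.le]
        field_simp

lemma abs_Phi_sub_le (ha : 0 < a) (hν : ν < 1) (hα₀ : 0 < α₀) (hLcont : Continuous L)
    (hNcont : Continuous N) (hLm : 0 < Lm) (hL : ∀ x, Lm ≤ L x) (hN0 : ∀ x, 0 ≤ N x)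
    (hNM : ∀ x, N x ≤ NM) (hLtil : 0 ≤ Ltil) (hNtil : 0 ≤ Ntil)
    (hLlip : ∀ x y, |L x - L y| ≤ Ltil * |x - y|) (hNlip : ∀ x y, |N x - N y| ≤ Ntil * |x - y|)
    (hu : ContinuousOn u (Icc α₀ ξ)) (hw : ContinuousOn w (Icc α₀ ξ))
    (hδ : ∀ t ∈ Icc α₀ ξ, |u t - w t| ≤ δ) {η : ℝ} (hη : η ∈ Icc α₀ ξ) :
    |Phi a ν L N α₀ u η - Phi a ν L N α₀ w η| ≤ PhiTilde a ν Lm NM Ltil Ntil α₀ ξ * δ := by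
  have hαξ : α₀ ≤ ξ := hη.1.trans hη.2
  have hLpos : ∀ x, 0 < L x := fun x => hLm.trans_le (hL x)
  have hint : ∀ z, ContinuousOn z (Icc α₀ ξ) →
      IntervalIntegrable (fun v => Efun a L N α₀ z v / (v ^ ν * L (z v))) volume α₀ η :=
    fun z hz => ((continuousOn_Phi_integrand hα₀ hαξ hLcont hNcont hLpos hz).mono
      (Icc_subset_Icc_right hη.2)).intervalIntegrable_of_Icc hη.1
  have hbound := abs_intervalIntegral_sub_le hη.1 hη.2 (hint u hu) (hint w hw)
    (h := fun v => δ * phiTildeIntegrand a ν Lm NM Ltil Ntil α₀ v)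
    ((continuousOn_const.mul (continuousOn_phiTildeIntegrand hα₀)).intervalIntegrable_of_Icc hαξ)
    fun t ht => abs_Phi_integrand_sub_le ha hα₀ hLcont hNcont hLm hL hN0 hNM hLtil hNtil hLlip
      hNlip hu hw hδ ht
  rw [intervalIntegral.integral_const_mul] at hbound
  rw [Phi, Phi, ← mul_sub, abs_mul, abs_of_pos (rpow_pos_of_pos hα₀ ν),
    PhiTilde_eq_integral hν hα₀ (hα₀.trans_le hαξ) hLm.ne']
  calc α₀ ^ ν * |(∫ v in α₀..η, Efun a L N α₀ u v / (v ^ ν * L (u v)))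
        - ∫ v in α₀..η, Efun a L N α₀ w v / (v ^ ν * L (w v))|
      ≤ α₀ ^ ν * (δ * ∫ v in α₀..ξ, phiTildeIntegrand a ν Lm NM Ltil Ntil α₀ v) := by gcongr
    _ = α₀ ^ ν * (∫ v in α₀..ξ, phiTildeIntegrand a ν Lm NM Ltil Ntil α₀ v) * δ := by ring

end Phi

theorem stmt_5_general (a ν α₀ ξ : ℝ) (L N : ℝ → ℝ) (Lm LM Nm NM Ltil Ntil q : ℝ)
    (ha : 0 < a) (hν1 : ν < 1) (hα₀ : 0 < α₀) (hαξ : α₀ < ξ)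
    (hq : 0 < q)
    (hLcont : Continuous L) (hNcont : Continuous N)
    (hLm : 0 < Lm) (hNm : 0 < Nm) (hLtil : 0 < Ltil) (hNtil : 0 < Ntil)
    (hL : ∀ x : ℝ, Lm ≤ L x ∧ L x ≤ LM)
    (hN : ∀ x : ℝ, Nm ≤ N x ∧ N x ≤ NM)
    (hLlip : ∀ x y : ℝ, |L x - L y| ≤ Ltil * |x - y|)
    (hNlip : ∀ x y : ℝ, |N x - N y| ≤ Ntil * |x - y|) :
    ∀ u ustar : ℝ → ℝ, ContinuousOn u (Icc α₀ ξ) → ContinuousOn ustar (Icc α₀ ξ) →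
      supNorm α₀ ξ (fun η =>
          q * (Phi a ν L N α₀ u ξ - Phi a ν L N α₀ u η) -
            q * (Phi a ν L N α₀ ustar ξ - Phi a ν L N α₀ ustar η)) ≤
        2 * q * PhiTilde a ν Lm NM Ltil Ntil α₀ ξ *
          supNorm α₀ ξ (fun η => u η - ustar η) := by
  intro u ustar hu hustar
  set δ := supNorm α₀ ξ (fun η => u η - ustar η)
  have hΦ : ∀ η ∈ Icc α₀ ξ, |Phi a ν L N α₀ u η - Phi a ν L N α₀ ustar η|
      ≤ PhiTilde a ν Lm NM Ltil Ntil α₀ ξ * δ := fun η hη =>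
    abs_Phi_sub_le ha hν1 hα₀ hLcont hNcont hLm (fun x => (hL x).1)
      (fun x => hNm.le.trans (hN x).1) (fun x => (hN x).2) hLtil.le hNtil.le hLlip hNlip hu hustar
      (fun t ht => abs_le_supNorm (hu.sub hustar) ht) hη
  refine supNorm_le hαξ.le fun η hη => ?_
  calc |q * (Phi a ν L N α₀ u ξ - Phi a ν L N α₀ u η)
        - q * (Phi a ν L N α₀ ustar ξ - Phi a ν L N α₀ ustar η)|
      = |q * ((Phi a ν L N α₀ u ξ - Phi a ν L N α₀ ustar ξ)
          - (Phi a ν L N α₀ u η - Phi a ν L N α₀ ustar η))| := by ring_nf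
    _ ≤ q * (|Phi a ν L N α₀ u ξ - Phi a ν L N α₀ ustar ξ|
          + |Phi a ν L N α₀ u η - Phi a ν L N α₀ ustar η|) := by
        rw [abs_mul, abs_of_pos hq]
        gcongr
        exact abs_sub _ _
    _ ≤ q * (PhiTilde a ν Lm NM Ltil Ntil α₀ ξ * δ + PhiTilde a ν Lm NM Ltil Ntil α₀ ξ * δ) := by
        gcongr
        exacts [hΦ ξ (right_mem_Icc.mpr hαξ.le), hΦ η hη]
    _ = 2 * q * PhiTilde a ν Lm NM Ltil Ntil α₀ ξ * δ := by ring

theorem stmt_5 (a ν α₀ ξ : ℝ) (L N : ℝ → ℝ) (Lm LM Nm NM Ltil Ntil q : ℝ)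
    (ha : 0 < a) (hν0 : 0 < ν) (hν1 : ν < 1) (hα₀ : 0 < α₀) (hαξ : α₀ < ξ)
    (hq : 0 < q)
    (hLcont : Continuous L) (hNcont : Continuous N)
    (hLm : 0 < Lm) (hNm : 0 < Nm) (hLtil : 0 < Ltil) (hNtil : 0 < Ntil)
    (hL : ∀ x : ℝ, Lm ≤ L x ∧ L x ≤ LM)
    (hN : ∀ x : ℝ, Nm ≤ N x ∧ N x ≤ NM)
    (hLlip : ∀ x y : ℝ, |L x - L y| ≤ Ltil * |x - y|)
    (hNlip : ∀ x y : ℝ, |N x - N y| ≤ Ntil * |x - y|) :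
    ∀ u ustar : ℝ → ℝ, ContinuousOn u (Icc α₀ ξ) → ContinuousOn ustar (Icc α₀ ξ) →
      supNorm α₀ ξ (fun η =>
          q * (Phi a ν L N α₀ u ξ - Phi a ν L N α₀ u η) -
            q * (Phi a ν L N α₀ ustar ξ - Phi a ν L N α₀ ustar η)) ≤
        2 * q * PhiTilde a ν Lm NM Ltil Ntil α₀ ξ *
          supNorm α₀ ξ (fun η => u η - ustar η) :=
  stmt_5_general a ν α₀ ξ L N Lm LM Nm NM Ltil Ntil q ha hν1 hα₀ hαξ hq hLcont hNcont hLm hNm hLtil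
    hNtil hL hN hLlip hNlip
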